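/- arXiv:2205.08022 — 2 statements merged into one kernel-verified Lean document; each statement's English description precedes it below -/
import Mathlib

section
/- Let I be a critical-set of a graph G, i.e., a nonempty independent set such that every nonempty subset J ⊆ I satisfies surp(J) ≥ surp(I). If G has a vertex cover of size at most k, then G has a vertex cover C of size at most k with either I ⊆ C or I ∩ C = ∅. -/
open Finset

/-- `I` is an independent set of vertices in `G`. -/
def IsIndep {V : Type*} (G : SimpleGraph V) (I : Finset V) : Prop :=
  ∀ u ∈ I, ∀ v ∈ I, ¬ G.Adj u v

open Classical in
/-- The (open) neighborhood `N(I)` of a vertex set `I`. -/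
noncomputable def nbr {V : Type*} [Fintype V] (G : SimpleGraph V) (I : Finset V) : Finset V :=
  Finset.univ.filter (fun v => v ∉ I ∧ ∃ u ∈ I, G.Adj u v)

/-- The surplus `|N(I)| - |I|` of a vertex set `I`. -/
noncomputable def surp {V : Type*} [Fintype V] (G : SimpleGraph V) (I : Finset V) : ℤ :=
  ((nbr G I).card : ℤ) - (I.card : ℤ)

/-- `C` is a vertex cover of `G`. -/
def IsCover {V : Type*} (G : SimpleGraph V) (C : Finset V) : Prop :=
  ∀ u v, G.Adj u v → u ∈ C ∨ v ∈ C

lemma mem_nbr {V : Type*} [Fintype V] [DecidableEq V] {G : SimpleGraph V} {I : Finset V}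
    {v : V} : v ∈ nbr G I ↔ v ∉ I ∧ ∃ u ∈ I, G.Adj u v := by
  simp [nbr]

/-- For a critical-set `I`, if `G` has a vertex cover of size at most `k`,
then it has one either containing `I` or disjoint from `I`. -/
theorem critical_set_cover {V : Type*} [Fintype V] [DecidableEq V] (G : SimpleGraph V)
    (I : Finset V) (k : ℕ)
    (hne : I.Nonempty) (hind : IsIndep G I)
    (hcrit : ∀ J ⊆ I, J.Nonempty → surp G I ≤ surp G J)
    (hcov : ∃ C : Finset V, IsCover G C ∧ C.card ≤ k) :
    ∃ C : Finset V, IsCover G C ∧ C.card ≤ k ∧ (I ⊆ C ∨ I ∩ C = ∅) := by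
  obtain ⟨C, hC, hCk⟩ := hcov
  by_cases hIC : I ⊆ C
  · exact ⟨C, hC, hCk, Or.inl hIC⟩
  -- J = vertices of I not covered
  set J : Finset V := I \ C with hJdef
  have hJI : J ⊆ I := sdiff_subset
  have hJne : J.Nonempty := by
    rw [sdiff_nonempty]; exact hIC
  -- neighbors of J lie in N(I) ∩ C
  have hNJ : nbr G J ⊆ nbr G I ∩ C := by
    intro v hv
    rw [mem_nbr] at hv
    obtain ⟨hvJ, u, huJ, hadj⟩ := hv
    have huI : u ∈ I := hJI huJ
    have hvI : v ∉ I := fun hvI => hind u huI v hvI hadj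
    have hvC : v ∈ C := by
      rcases hC u v hadj with h | h
      · exact absurd (mem_sdiff.mp huJ).2 (not_not_intro h)
      · exact h
    exact mem_inter.mpr ⟨mem_nbr.mpr ⟨hvI, u, huI, hadj⟩, hvC⟩
  -- the new cover
  set C1 : Finset V := (C \ I) ∪ nbr G I with hC1def
  have hC1cover : IsCover G C1 := by
    intro u v hadj
    rcases hC u v hadj with h | h
    · by_cases huI : u ∈ I
      · right
        have hvI : v ∉ I := fun hvI => hind u huI v hvI hadj
        exact mem_union.mpr (Or.inr (mem_nbr.mpr ⟨hvI, u, huI, hadj⟩))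
      · exact Or.inl (mem_union.mpr (Or.inl (mem_sdiff.mpr ⟨h, huI⟩)))
    · by_cases hvI : v ∈ I
      · left
        have huI : u ∉ I := fun huI => hind v hvI u huI hadj.symm
        exact mem_union.mpr (Or.inr (mem_nbr.mpr ⟨huI, v, hvI, hadj.symm⟩))
      · exact Or.inr (mem_union.mpr (Or.inl (mem_sdiff.mpr ⟨h, hvI⟩)))
  have hdisj : I ∩ C1 = ∅ := by
    ext v
    simp only [hC1def, mem_inter, mem_union, mem_sdiff, mem_nbr, notMem_empty, iff_false, not_and]
    rintro hvI (⟨_, h⟩ | ⟨h, _⟩) <;> exact h hvI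
  -- cardinality bound
  have hsub : C1 ⊆ (C \ I) ∪ (nbr G I \ C) := by
    intro v hv
    rcases mem_union.mp hv with h | h
    · exact mem_union.mpr (Or.inl h)
    · by_cases hvC : v ∈ C
      · have hvI : v ∉ I := (mem_nbr.mp h).1
        exact mem_union.mpr (Or.inl (mem_sdiff.mpr ⟨hvC, hvI⟩))
      · exact mem_union.mpr (Or.inr (mem_sdiff.mpr ⟨h, hvC⟩))
  have h1 : C1.card ≤ (C \ I).card + (nbr G I \ C).card :=
    le_trans (card_le_card hsub) (card_union_le _ _)
  have h2 : (C \ I).card + (C ∩ I).card = C.card := by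
    rw [card_sdiff_add_card_inter]
  have h3 : (nbr G I \ C).card + (nbr G I ∩ C).card = (nbr G I).card := by
    rw [card_sdiff_add_card_inter]
  have h4 : (nbr G J).card ≤ (nbr G I ∩ C).card := card_le_card hNJ
  have h5 : J.card + (I ∩ C).card = I.card := by
    rw [hJdef, card_sdiff_add_card_inter]
  have h6 : (I ∩ C).card = (C ∩ I).card := by rw [inter_comm]
  have hcr := hcrit J hJI hJne
  unfold surp at hcr
  have hfin : C1.card ≤ C.card := by omega
  exact ⟨C1, hC1cover, le_trans hfin hCk, Or.inr hdisj⟩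
end

section
/- Suppose x is a vertex of a graph G that is a blocker of vertices u₁, …, u_ℓ (i.e., x lies in a min-set of G − N[u_i] and minsurp(G − N[u_i]) ≤ 0 for each i, with x not adjacent to any u_i). If G has a vertex cover of size at most k, then either G − {u₁,…,u_ℓ, x} has a vertex cover of size at most k − ℓ − 1, or G − N[x] has a vertex cover of size at most k − deg(x). -/
open Finset

open Classical in
/-- The neighborhood of `I` inside the induced subgraph of `G` on `S`. -/
noncomputable def nbrOn {V : Type*} (G : SimpleGraph V) (S I : Finset V) : Finset V :=
  S.filter (fun v => v ∉ I ∧ ∃ u ∈ I, G.Adj u v)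

/-- The surplus of `I` inside the induced subgraph of `G` on `S`. -/
noncomputable def surpOn {V : Type*} (G : SimpleGraph V) (S I : Finset V) : ℤ :=
  ((nbrOn G S I).card : ℤ) - (I.card : ℤ)

/-- The minimum surplus over nonempty independent sets of the induced subgraph of `G` on `S`. -/
noncomputable def minsurpOn {V : Type*} (G : SimpleGraph V) (S : Finset V) : ℤ :=
  sInf {z : ℤ | ∃ I : Finset V, I ⊆ S ∧ I.Nonempty ∧ IsIndep G I ∧ z = surpOn G S I}

/-- `C` is a vertex cover of the induced subgraph of `G` on `S`. -/
def IsCoverOn {V : Type*} (G : SimpleGraph V) (S C : Finset V) : Prop :=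
  C ⊆ S ∧ ∀ u ∈ S, ∀ v ∈ S, G.Adj u v → u ∈ C ∨ v ∈ C

lemma mem_nbrOn' {V : Type*} [DecidableEq V] (G : SimpleGraph V) (S I : Finset V) (v : V) :
    v ∈ nbrOn G S I ↔ v ∈ S ∧ v ∉ I ∧ ∃ u ∈ I, G.Adj u v := by
  classical
  simp [nbrOn]

lemma bddBelow_surp {V : Type*} [Fintype V] [DecidableEq V] (G : SimpleGraph V) (S : Finset V) :
    BddBelow {z : ℤ | ∃ I : Finset V, I ⊆ S ∧ I.Nonempty ∧ IsIndep G I ∧ z = surpOn G S I} := by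
  refine ⟨-(S.card : ℤ), ?_⟩
  rintro z ⟨I, hI, -, -, rfl⟩
  have h1 : (I.card : ℤ) ≤ (S.card : ℤ) := by exact_mod_cast Finset.card_le_card hI
  have h2 : (0 : ℤ) ≤ ((nbrOn G S I).card : ℤ) := Int.natCast_nonneg _
  unfold surpOn
  linarith

/-- Key lemma: any cover on `S` can be replaced by one of no larger size avoiding a
given min-surplus set `I`, provided `minsurpOn G S ≤ 0`. -/
lemma cover_avoiding_minset {V : Type*} [Fintype V] [DecidableEq V] (G : SimpleGraph V)
    (S I D : Finset V) (hIS : I ⊆ S) (hind : IsIndep G I)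
    (hmin : surpOn G S I = minsurpOn G S) (hle : minsurpOn G S ≤ 0)
    (hD : IsCoverOn G S D) :
    ∃ D' : Finset V, IsCoverOn G S D' ∧ D'.card ≤ D.card ∧ ∀ v ∈ I, v ∉ D' := by
  classical
  set A := nbrOn G S I with hAdef
  set J := I \ D with hJdef
  set B := nbrOn G S J with hBdef
  have hJI : J ⊆ I := Finset.sdiff_subset
  have hAnotI : ∀ v ∈ A, v ∉ I := fun v hv => ((mem_nbrOn' G S I v).mp hv).2.1
  have hBA : B ⊆ A := by
    intro v hv
    rw [mem_nbrOn'] at hv ⊢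
    obtain ⟨hvS, hvJ, w, hwJ, hadj⟩ := hv
    have hwI : w ∈ I := hJI hwJ
    have hvI : v ∉ I := fun hvI => hind w hwI v hvI hadj
    exact ⟨hvS, hvI, w, hwI, hadj⟩
  have hBD : B ⊆ D \ I := by
    intro v hv
    have hvA := hBA hv
    rw [mem_nbrOn'] at hv
    obtain ⟨hvS, hvJ, w, hwJ, hadj⟩ := hv
    have hwS : w ∈ S := hIS (hJI hwJ)
    have hwD : w ∉ D := (Finset.mem_sdiff.mp hwJ).2
    rcases hD.2 w hwS v hvS hadj with h | h
    · exact absurd h hwD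
    · exact Finset.mem_sdiff.mpr ⟨h, hAnotI v hvA⟩
  -- key inequality : surp(I) ≤ |B| - |J|
  have hkey : surpOn G S I ≤ (B.card : ℤ) - (J.card : ℤ) := by
    rcases J.eq_empty_or_nonempty with hJe | hJne
    · have hBe : B = (∅ : Finset V) := by
        apply Finset.eq_empty_iff_forall_notMem.mpr
        intro v hv
        rw [mem_nbrOn'] at hv
        obtain ⟨-, -, w, hw, -⟩ := hv
        simp [hJe] at hw
      rw [hBe, hJe]
      simpa using hmin ▸ hle
    · have hJind : IsIndep G J := fun a ha b hb => hind a (hJI ha) b (hJI hb)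
      have hJS : J ⊆ S := hJI.trans hIS
      have hmem : surpOn G S J ∈
          {z : ℤ | ∃ I : Finset V, I ⊆ S ∧ I.Nonempty ∧ IsIndep G I ∧ z = surpOn G S I} :=
        ⟨J, hJS, hJne, hJind, rfl⟩
      have := csInf_le (bddBelow_surp G S) hmem
      rw [hmin]
      calc minsurpOn G S ≤ surpOn G S J := this
        _ = (B.card : ℤ) - (J.card : ℤ) := rfl
  refine ⟨(D \ I) ∪ A, ⟨?_, ?_⟩, ?_, ?_⟩
  · exact Finset.union_subset ((Finset.sdiff_subset).trans hD.1) (fun v hv => ((mem_nbrOn' G S I v).mp hv).1)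
  · intro a ha b hb hab
    by_cases haI : a ∈ I
    · right
      apply Finset.mem_union_right
      exact (mem_nbrOn' G S I b).mpr ⟨hb, fun hbI => hind a haI b hbI hab, a, haI, hab⟩
    · by_cases hbI : b ∈ I
      · left
        apply Finset.mem_union_right
        exact (mem_nbrOn' G S I a).mpr ⟨ha, haI, b, hbI, hab.symm⟩
      · rcases hD.2 a ha b hb hab with h | h
        · exact Or.inl (Finset.mem_union_left _ (Finset.mem_sdiff.mpr ⟨h, haI⟩))
        · exact Or.inr (Finset.mem_union_left _ (Finset.mem_sdiff.mpr ⟨h, hbI⟩))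
  · -- cardinality
    have e1 : ((D \ I) ∪ A).card = (D \ I).card + (A \ (D \ I)).card := by
      rw [← Finset.union_sdiff_self_eq_union]
      exact Finset.card_union_of_disjoint Finset.disjoint_sdiff
    have e2 : (A \ (D \ I)).card ≤ (A \ B).card :=
      Finset.card_le_card (Finset.sdiff_subset_sdiff (Finset.Subset.refl _) hBD)
    have e3 : (A \ B).card + B.card = A.card := Finset.card_sdiff_add_card_eq_card hBA
    have e4 : (D \ I).card + (D ∩ I).card = D.card := Finset.card_sdiff_add_card_inter D I
    have e5 : J.card + (I ∩ D).card = I.card := Finset.card_sdiff_add_card_inter I D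
    have e6 : (D ∩ I).card = (I ∩ D).card := by rw [Finset.inter_comm]
    have hkey' : A.card + J.card ≤ B.card + I.card := by
      have : (A.card : ℤ) - (I.card : ℤ) ≤ (B.card : ℤ) - (J.card : ℤ) := hkey
      omega
    omega
  · intro v hvI hv
    rcases Finset.mem_union.mp hv with h | h
    · exact (Finset.mem_sdiff.mp h).2 hvI
    · exact hAnotI v h hvI

/-- Validity of branching rule (B): if `x` is a blocker of `u₁, …, u_ℓ` (for each `i`,
`minsurp(G − N[uᵢ]) ≤ 0` and `x` lies in a min-set of `G − N[uᵢ]`, with `x` not adjacent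
to any `uᵢ`), and `G` has a vertex cover of size at most `k`, then either
`G − {u₁,…,u_ℓ,x}` has a vertex cover of size at most `k − ℓ − 1`, or `G − N[x]` has a
vertex cover of size at most `k − deg(x)`. -/
theorem blocker_branching_valid {V : Type*} [Fintype V] [DecidableEq V]
    (G : SimpleGraph V) [DecidableRel G.Adj] (k ℓ : ℕ) (u : Fin ℓ → V) (x : V)
    (huinj : Function.Injective u)
    (hnadj : ∀ i, ¬ G.Adj (u i) x)
    (hblock : ∀ i, minsurpOn G (Finset.univ \ insert (u i) (G.neighborFinset (u i))) ≤ 0 ∧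
      ∃ I : Finset V, I ⊆ Finset.univ \ insert (u i) (G.neighborFinset (u i)) ∧
        I.Nonempty ∧ IsIndep G I ∧
        surpOn G (Finset.univ \ insert (u i) (G.neighborFinset (u i))) I =
          minsurpOn G (Finset.univ \ insert (u i) (G.neighborFinset (u i))) ∧
        x ∈ I)
    (hcov : ∃ C : Finset V, IsCover G C ∧ C.card ≤ k) :
    (∃ C : Finset V, IsCoverOn G (Finset.univ \ insert x (Finset.image u Finset.univ)) C ∧
      C.card + ℓ + 1 ≤ k) ∨
    (∃ C : Finset V, IsCoverOn G (Finset.univ \ insert x (G.neighborFinset x)) C ∧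
      C.card + G.degree x ≤ k) := by
  classical
  by_cases hx : ∃ C : Finset V, IsCover G C ∧ C.card ≤ k ∧ x ∉ C
  · -- there is a cover avoiding x : take the right branch
    right
    obtain ⟨C, hC, hk, hxC⟩ := hx
    set T := insert x (G.neighborFinset x) with hT
    refine ⟨C ∩ (Finset.univ \ T), ⟨Finset.inter_subset_right, ?_⟩, ?_⟩
    · intro a ha b hb hab
      rcases hC a b hab with h | h
      · exact Or.inl (Finset.mem_inter.mpr ⟨h, ha⟩)
      · exact Or.inr (Finset.mem_inter.mpr ⟨h, hb⟩)
    · have hN : G.neighborFinset x ⊆ C ∩ T := by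
        intro v hv
        have hadj : G.Adj x v := by rwa [SimpleGraph.mem_neighborFinset] at hv
        rcases hC x v hadj with h | h
        · exact absurd h hxC
        · exact Finset.mem_inter.mpr ⟨h, Finset.mem_insert.mpr (Or.inr hv)⟩
      have h1 : G.degree x ≤ (C ∩ T).card := by
        rw [← SimpleGraph.card_neighborFinset_eq_degree]
        exact Finset.card_le_card hN
      have h2 : (C ∩ (Finset.univ \ T)).card + (C ∩ T).card ≤ C.card := by
        rw [← Finset.card_union_of_disjoint]
        · apply Finset.card_le_card
          intro v hv
          rcases Finset.mem_union.mp hv with h | h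
          · exact (Finset.mem_inter.mp h).1
          · exact (Finset.mem_inter.mp h).1
        · apply Finset.disjoint_left.mpr
          intro v hv hv'
          have h1 := (Finset.mem_inter.mp hv).2
          have h2 := (Finset.mem_inter.mp hv').2
          exact (Finset.mem_sdiff.mp h1).2 h2
      omega
  · -- every small cover contains x : take the left branch
    left
    push_neg at hx
    obtain ⟨C, hC, hk⟩ := hcov
    have hxC : x ∈ C := hx C hC hk
    -- x ≠ u i for all i
    have hxu : ∀ i, x ≠ u i := by
      intro i hxi
      obtain ⟨-, I, hIS, -, -, -, hxI⟩ := hblock i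
      have := hIS hxI
      rw [Finset.mem_sdiff] at this
      exact this.2 (by rw [hxi]; exact Finset.mem_insert_self _ _)
    -- every u i belongs to C
    have hu : ∀ i, u i ∈ C := by
      intro i
      by_contra hui
      obtain ⟨hle, I, hIS, hIne, hind, hmin, hxI⟩ := hblock i
      set S := Finset.univ \ insert (u i) (G.neighborFinset (u i)) with hS
      -- C ∩ S is a cover on S
      have hDcov : IsCoverOn G S (C ∩ S) := by
        refine ⟨Finset.inter_subset_right, ?_⟩
        intro a ha b hb hab
        rcases hC a b hab with h | h
        · exact Or.inl (Finset.mem_inter.mpr ⟨h, ha⟩)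
        · exact Or.inr (Finset.mem_inter.mpr ⟨h, hb⟩)
      obtain ⟨D', hD'cov, hD'card, hD'avoid⟩ :=
        cover_avoiding_minset G S I (C ∩ S) hIS hind hmin hle hDcov
      -- the new global cover
      set C' := D' ∪ G.neighborFinset (u i) with hC'
      have hC'cover : IsCover G C' := by
        intro a b hab
        by_cases haN : a ∈ insert (u i) (G.neighborFinset (u i))
        · rcases Finset.mem_insert.mp haN with h | h
          · right
            apply Finset.mem_union_right
            rw [SimpleGraph.mem_neighborFinset]
            exact h ▸ hab
          · exact Or.inl (Finset.mem_union_right _ h)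
        · by_cases hbN : b ∈ insert (u i) (G.neighborFinset (u i))
          · rcases Finset.mem_insert.mp hbN with h | h
            · left
              apply Finset.mem_union_right
              rw [SimpleGraph.mem_neighborFinset]
              exact h ▸ hab.symm
            · exact Or.inr (Finset.mem_union_right _ h)
          · have haS : a ∈ S := Finset.mem_sdiff.mpr ⟨Finset.mem_univ _, haN⟩
            have hbS : b ∈ S := Finset.mem_sdiff.mpr ⟨Finset.mem_univ _, hbN⟩
            rcases hD'cov.2 a haS b hbS hab with h | h
            · exact Or.inl (Finset.mem_union_left _ h)
            · exact Or.inr (Finset.mem_union_left _ h)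
      -- size bound
      have hNC : G.neighborFinset (u i) ⊆ C := by
        intro v hv
        have hadj : G.Adj (u i) v := by rwa [SimpleGraph.mem_neighborFinset] at hv
        rcases hC (u i) v hadj with h | h
        · exact absurd h hui
        · exact h
      have hdisj : Disjoint (C ∩ S) (G.neighborFinset (u i)) := by
        apply Finset.disjoint_left.mpr
        intro v hv hv'
        have := (Finset.mem_inter.mp hv).2
        exact (Finset.mem_sdiff.mp this).2 (Finset.mem_insert.mpr (Or.inr hv'))
      have hsum : (C ∩ S).card + (G.neighborFinset (u i)).card ≤ C.card := by
        rw [← Finset.card_union_of_disjoint hdisj]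
        apply Finset.card_le_card
        exact Finset.union_subset Finset.inter_subset_left hNC
      have hC'card : C'.card ≤ k := by
        have h7 : C'.card ≤ D'.card + (G.neighborFinset (u i)).card :=
          hC' ▸ Finset.card_union_le _ _
        omega
      -- x ∉ C'
      have hxC' : x ∉ C' := by
        intro hxc
        rcases Finset.mem_union.mp hxc with h | h
        · exact hD'avoid x hxI h
        · exact hnadj i (by rwa [SimpleGraph.mem_neighborFinset] at h)
      exact hxC' (hx C' hC'cover hC'card)
    -- now assemble the cover for the left branch
    set T := insert x (Finset.image u Finset.univ) with hT
    have hTC : T ⊆ C := by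
      intro v hv
      rcases Finset.mem_insert.mp hv with h | h
      · exact h ▸ hxC
      · obtain ⟨i, -, rfl⟩ := Finset.mem_image.mp h
        exact hu i
    have hTcard : T.card = ℓ + 1 := by
      rw [hT, Finset.card_insert_of_notMem, Finset.card_image_of_injective _ huinj]
      · simp
      · intro hmem
        obtain ⟨i, -, hi⟩ := Finset.mem_image.mp hmem
        exact hxu i hi.symm
    refine ⟨C ∩ (Finset.univ \ T), ⟨Finset.inter_subset_right, ?_⟩, ?_⟩
    · intro a ha b hb hab
      rcases hC a b hab with h | h
      · exact Or.inl (Finset.mem_inter.mpr ⟨h, ha⟩)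
      · exact Or.inr (Finset.mem_inter.mpr ⟨h, hb⟩)
    · have hdisj : Disjoint (C ∩ (Finset.univ \ T)) T := by
        apply Finset.disjoint_left.mpr
        intro v hv hv'
        exact (Finset.mem_sdiff.mp (Finset.mem_inter.mp hv).2).2 hv'
      have hsum : (C ∩ (Finset.univ \ T)).card + T.card ≤ C.card := by
        rw [← Finset.card_union_of_disjoint hdisj]
        exact Finset.card_le_card (Finset.union_subset Finset.inter_subset_left hTC)
      omega
end
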